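/- arXiv:math/9806162 — 4 statements merged into one kernel-verified Lean document; each statement's English description precedes it below -/
import Mathlib

section
/- For every odd positive integer L, the matrix S(L) is symmetric and satisfies S(L)·S(L) = Id, i.e. S(L) is a real orthogonal involution. -/
/-- Index set `I_L = {o, v} ∪ {1,…,s} ∪ {σ, σ̄}` of primary fields of `SO(L)` level 2,
where `s = (L−1)/2`. The antisymmetric tensor of rank `ℓ` (for `1 ≤ ℓ ≤ s`) is `t l`
with `ℓ = l + 1` for `l : Fin s`. -/
inductive BIdx (s : ℕ) : Type
  | o : BIdx s
  | v : BIdx s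
  | σ : BIdx s
  | σ' : BIdx s
  | t : Fin s → BIdx s
  deriving DecidableEq, Fintype

/-- The modular S-matrix of `SO(L)` level 2 (`L` odd, `s = (L−1)/2`), with
`a = 1/(2√L)`: `S_{oo} = S_{ov} = S_{vv} = a`; `S_{oℓ} = S_{vℓ} = 2a`;
`S_{ℓℓ'} = 4a cos(2πℓℓ'/L)`; `S_{oσ} = S_{oσ̄} = 1/2`; `S_{vσ} = S_{vσ̄} = −1/2`;
`S_{ℓσ} = S_{ℓσ̄} = 0`; `S_{σσ} = S_{σ̄σ̄} = 1/2`; `S_{σσ̄} = −1/2`. -/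
noncomputable def Smat (L s : ℕ) : Matrix (BIdx s) (BIdx s) ℝ := fun i j =>
  match i, j with
  | .o, .o => 1 / (2 * Real.sqrt L)
  | .o, .v => 1 / (2 * Real.sqrt L)
  | .v, .o => 1 / (2 * Real.sqrt L)
  | .v, .v => 1 / (2 * Real.sqrt L)
  | .o, .t _ => 2 * (1 / (2 * Real.sqrt L))
  | .t _, .o => 2 * (1 / (2 * Real.sqrt L))
  | .v, .t _ => 2 * (1 / (2 * Real.sqrt L))
  | .t _, .v => 2 * (1 / (2 * Real.sqrt L))
  | .t l, .t l' => 4 * (1 / (2 * Real.sqrt L)) *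
      Real.cos (2 * Real.pi * ((l : ℕ) + 1) * ((l' : ℕ) + 1) / L)
  | .o, .σ => 1 / 2
  | .o, .σ' => 1 / 2
  | .σ, .o => 1 / 2
  | .σ', .o => 1 / 2
  | .v, .σ => -(1 / 2)
  | .v, .σ' => -(1 / 2)
  | .σ, .v => -(1 / 2)
  | .σ', .v => -(1 / 2)
  | .t _, .σ => 0
  | .t _, .σ' => 0
  | .σ, .t _ => 0
  | .σ', .t _ => 0
  | .σ, .σ => 1 / 2
  | .σ', .σ' => 1 / 2
  | .σ, .σ' => -(1 / 2)
  | .σ', .σ => -(1 / 2)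


/-!
Write `a = 1/(2√L)`. The one non-trivial input is the cosine sum
`∑_{ℓ=1}^{s} cos(2πℓk/L) = -1/2` for `L ∤ k`: at `x = 2πk/L` the Dirichlet-kernel identity
`sin(x/2) ∑_{ℓ=1}^{s} cos(ℓx) = sin(sx/2) cos((s+1)x/2) = (sin(Lx/2) - sin(x/2))/2` holds with
`sin(Lx/2) = sin(πk) = 0` and `sin(x/2) ≠ 0`. Products of two cosines reduce to such sums with
`k = ℓ + ℓ'` and `k = ℓ - ℓ'`, after which every entry of `S·S` is an identity in `a` using `4a²L = 1`.
-/

open Finset Real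

theorem Int.not_dvd_of_ne_zero_of_abs_lt {m k : ℤ} (hk : k ≠ 0) (h : |k| < m) : ¬ m ∣ k :=
  fun hdvd => hk (Int.eq_zero_of_abs_lt_dvd hdvd h)

theorem sum_cos_eq_neg_half {N s : ℕ} (hN : N = 2 * s + 1) {k : ℤ} (hk : ¬ (N : ℤ) ∣ k) :
    ∑ l : Fin s, cos (2 * π * ((l : ℕ) + 1) * k / N) = -(1 / 2) := by
  have hN0 : (N : ℝ) ≠ 0 := by rw [hN]; positivity
  obtain ⟨x, hx⟩ : ∃ x, x = 2 * π * k / N := ⟨_, rfl⟩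
  have hsin : sin (x / 2) ≠ 0 := by
    rw [sin_ne_zero_iff]
    intro n hn
    rw [hx] at hn
    field_simp at hn
    refine hk ⟨n, ?_⟩
    have : (k : ℝ) = N * n := by linear_combination -hn
    exact_mod_cast this
  have hsin_N : sin (N * x / 2) = 0 := by
    rw [show N * x / 2 = k * π by rw [hx]; field_simp]
    exact sin_int_mul_pi k
  have hprod : sin (s * x / 2) * cos ((s - 1) * x / 2 + x) = -(sin (x / 2) / 2) := by
    have hadd := sin_add (s * x / 2) ((s - 1) * x / 2 + x)
    have hsub := sin_sub (s * x / 2) ((s - 1) * x / 2 + x)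
    rw [show s * x / 2 + ((s - 1) * x / 2 + x) = N * x / 2 by rw [hN]; push_cast; ring,
      hsin_N] at hadd
    rw [show s * x / 2 - ((s - 1) * x / 2 + x) = -(x / 2) by ring, sin_neg] at hsub
    linear_combination (-hadd - hsub) / 2
  have hsum : ∑ l : Fin s, cos (2 * π * ((l : ℕ) + 1) * k / N) =
      ∑ i ∈ range s, cos (x * i + x) := by
    rw [Fin.sum_univ_eq_sum_range (fun i => cos (2 * π * (i + 1) * k / N))]
    refine sum_congr rfl fun i _ => congrArg cos ?_
    rw [hx]
    ring
  rw [hsum]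
  refine mul_left_cancel₀ hsin ?_
  rw [sin_mul_sum_cos, hprod]
  ring

theorem sum_cos_succ_mul_succ {N s : ℕ} (hN : N = 2 * s + 1) (m : Fin s) :
    ∑ l : Fin s, cos (2 * π * ((l : ℕ) + 1) * ((m : ℕ) + 1) / N) = -(1 / 2) := by
  have hm := m.isLt
  simpa using sum_cos_eq_neg_half hN (k := (m : ℕ) + 1)
    (Int.not_dvd_of_ne_zero_of_abs_lt (by omega) (by rw [abs_of_pos (by omega)]; omega))

theorem sum_cos_succ_mul_succ' {N s : ℕ} (hN : N = 2 * s + 1) (m : Fin s) :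
    ∑ l : Fin s, cos (2 * π * ((m : ℕ) + 1) * ((l : ℕ) + 1) / N) = -(1 / 2) := by
  simp_rw [mul_right_comm (2 * π) ((m : ℕ) + 1 : ℝ)]
  exact sum_cos_succ_mul_succ hN m

theorem sum_cos_mul_cos {N s : ℕ} (hN : N = 2 * s + 1) (l m : Fin s) :
    ∑ j : Fin s, cos (2 * π * ((l : ℕ) + 1) * ((j : ℕ) + 1) / N) *
        cos (2 * π * ((j : ℕ) + 1) * ((m : ℕ) + 1) / N) =
      if l = m then (N : ℝ) / 4 - 1 / 2 else -(1 / 2) := by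
  have hl := l.isLt
  have hm := m.isLt
  have hprod (j : Fin s) : cos (2 * π * ((l : ℕ) + 1) * ((j : ℕ) + 1) / N) *
      cos (2 * π * ((j : ℕ) + 1) * ((m : ℕ) + 1) / N) =
      (cos (2 * π * ((j : ℕ) + 1) * (((l : ℤ) - m : ℤ) : ℝ) / N) +
        cos (2 * π * ((j : ℕ) + 1) * (((l : ℤ) + m + 2 : ℤ) : ℝ) / N)) / 2 := by
    rw [eq_div_iff two_ne_zero, mul_comm _ (2 : ℝ), ← mul_assoc, two_mul_cos_mul_cos]
    congr 2 <;> push_cast <;> ring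
  rw [sum_congr rfl fun j _ => hprod j, ← sum_div, sum_add_distrib,
    sum_cos_eq_neg_half hN (k := (l : ℤ) + m + 2)
      (Int.not_dvd_of_ne_zero_of_abs_lt (by omega) (by rw [abs_of_pos (by omega)]; omega))]
  split_ifs with hlm
  · subst hlm
    simp only [sub_self, Int.cast_zero, mul_zero, zero_div, cos_zero, sum_const, card_univ,
      Fintype.card_fin, nsmul_eq_mul, mul_one, hN]
    push_cast
    ring
  · have hlm' : (l : ℤ) ≠ m := by exact_mod_cast Fin.val_ne_of_ne hlm
    rw [sum_cos_eq_neg_half hN (Int.not_dvd_of_ne_zero_of_abs_lt (sub_ne_zero.mpr hlm')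
      (abs_sub_lt_iff.mpr ⟨by omega, by omega⟩))]
    ring

theorem BIdx.sum_eq {s : ℕ} {M : Type*} [AddCommMonoid M] (f : BIdx s → M) :
    ∑ i, f i = f .o + f .v + f .σ + f .σ' + ∑ l : Fin s, f (.t l) := by
  let e : Option (Option (Option (Option (Fin s)))) ≃ BIdx s :=
    { toFun := fun i => i.elim .o fun i => i.elim .v fun i => i.elim .σ fun i => i.elim .σ' .t
      invFun := fun
        | .o => none | .v => some none | .σ => some (some none) | .σ' => some (some (some none))
        | .t l => some (some (some (some l)))
      left_inv := by rintro (_ | _ | _ | _ | l) <;> rfl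
      right_inv := by rintro (_ | _ | _ | _ | l) <;> rfl }
  rw [← e.sum_comp]
  simp only [Fintype.sum_option, e, Equiv.coe_fn_mk, Option.elim]
  abel

theorem Smat_isSymm (L s : ℕ) : (Smat L s).IsSymm := by
  ext i j
  cases i <;> cases j <;> simp only [Matrix.transpose_apply, Smat, mul_right_comm (2 * π)]

theorem Smat_mul_self {L s : ℕ} (hL : L = 2 * s + 1) : Smat L s * Smat L s = 1 := by
  have hLr : (L : ℝ) = 2 * s + 1 := by rw [hL]; push_cast; ring
  have hsqrt : √(L : ℝ) ^ 2 = L := Real.sq_sqrt (Nat.cast_nonneg L)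
  have hsqrt0 : √(L : ℝ) ≠ 0 := by rw [hL]; positivity
  ext i j
  rw [Matrix.mul_apply, BIdx.sum_eq]
  cases i <;> cases j <;>
    simp only [Smat, mul_mul_mul_comm (4 * (1 / (2 * √(L : ℝ)))) (cos _), ← mul_sum, ← sum_mul,
      sum_cos_succ_mul_succ hL, sum_cos_succ_mul_succ' hL, sum_cos_mul_cos hL, sum_const, card_univ,
      Fintype.card_fin, nsmul_eq_mul, Matrix.one_apply, BIdx.t.injEq, reduceCtorEq, if_true,
      if_false] <;>
    (try split_ifs) <;> field_simp <;> linarith [hsqrt, hLr]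

/-- For every odd positive integer `L` (written `L = 2s + 1`), the modular
S-matrix of `SO(L)` level 2 is symmetric and squares to the identity, i.e. it is a real
orthogonal involution. -/
theorem so_level2_S_symmetric_involution (L s : ℕ) (hL : L = 2 * s + 1) :
    (Smat L s).IsSymm ∧ Smat L s * Smat L s = 1 :=
  ⟨Smat_isSymm L s, Smat_mul_self hL⟩
end

section
/- The map (l, m) ↦ min(lM + m·L̃M, L − lM − m·L̃M) is injective on the set {1,…,s̃} × {0,…,M−1}, its image is disjoint from the set {m·L̃M : 1 ≤ m ≤ (M−1)/2}, and the union of the image with {m·L̃M : 1 ≤ m ≤ (M−1)/2} is exactly the set of all positive multiples of M that are ≤ (L−1)/2. (This shows that in the new SO(L) level 2 modular invariant every character appears in exactly one block with multiplicity one.) -/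
lemma min_mul_sub (y N M : ℕ) : min (y*M) (N*M - y*M) = min y (N-y) * M := by
  rw [← Nat.sub_mul]
  rcases le_total y (N-y) with h|h
  · rw [min_eq_left h, min_eq_left (mul_le_mul_left h M)]
  · rw [min_eq_right h, min_eq_right (mul_le_mul_left h M)]

/-- For odd positive `M`, `L̃` with `L = L̃M²` and `s̃ = (L̃−1)/2`, the map
`(l, m) ↦ min(lM + m·L̃M, L − lM − m·L̃M)` is injective on `{1,…,s̃} × {0,…,M−1}`, its image
is disjoint from `{m·L̃M : 1 ≤ m ≤ (M−1)/2}`, and the union of the image with that set is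
exactly the set of positive multiples of `M` that are `≤ (L−1)/2`. -/
theorem so_level2_block_partition (M Lt L st : ℕ) (hM : Odd M) (hLt : Lt = 2 * st + 1)
    (hL : L = Lt * M ^ 2) :
    Set.InjOn (fun p : ℕ × ℕ => min (p.1 * M + p.2 * Lt * M) (L - (p.1 * M + p.2 * Lt * M)))
        ↑(Finset.Icc 1 st ×ˢ Finset.range M) ∧
      Disjoint
        ((Finset.Icc 1 st ×ˢ Finset.range M).image
          (fun p : ℕ × ℕ => min (p.1 * M + p.2 * Lt * M) (L - (p.1 * M + p.2 * Lt * M))))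
        ((Finset.Icc 1 ((M - 1) / 2)).image fun m => m * Lt * M) ∧
      ((Finset.Icc 1 st ×ˢ Finset.range M).image
          (fun p : ℕ × ℕ => min (p.1 * M + p.2 * Lt * M) (L - (p.1 * M + p.2 * Lt * M))))
        ∪ ((Finset.Icc 1 ((M - 1) / 2)).image fun m => m * Lt * M)
        = (Finset.Icc 1 ((L - 1) / 2)).filter fun x => M ∣ x := by
  obtain ⟨t, hM2⟩ := hM
  have hMpos : 0 < M := by omega
  have hLtpos : 0 < Lt := by omega
  have hL' : L = (Lt*M)*M := by rw [hL]; ring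
  have hNodd : Lt*M = 2*(2*(st*t) + st + t) + 1 := by rw [hLt, hM2]; ring
  have hLodd : ∃ w, L = 2*w+1 := by
    have hOLt : Odd Lt := by rw [hLt]; exact odd_two_mul_add_one st
    have hOM : Odd M := by rw [hM2]; exact ⟨t, by ring⟩
    have : Odd L := by rw [hL]; exact hOLt.mul hOM.pow
    obtain ⟨w, hw⟩ := this
    exact ⟨w, by omega⟩
  -- value formula and bound
  have hval : ∀ a b : ℕ, a ≤ st → b < M →
      a*M + b*Lt*M = (a + b*Lt)*M ∧ a + b*Lt + st + 1 ≤ Lt*M := by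
    intro a b ha hb
    refine ⟨by ring, ?_⟩
    have h1 : (b+1)*Lt ≤ M*Lt := mul_le_mul_left (by omega) Lt
    have h2 : (b+1)*Lt = b*Lt + Lt := by ring
    have h3 : M*Lt = Lt*M := mul_comm _ _
    omega
  have hmodL : ∀ a b : ℕ, a < Lt → (a + b*Lt) % Lt = a := by
    intro a b ha
    rw [Nat.add_mul_mod_self_right]; exact Nat.mod_eq_of_lt ha
  have hmodR : ∀ a b : ℕ, 1 ≤ a → a < Lt → b < M → (Lt*M - (a + b*Lt)) % Lt = Lt - a := by
    intro a b h1 h2 hb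
    have e : Lt*M = b*Lt + (M-1-b)*Lt + Lt := by
      have hMe : M = b + (M-1-b) + 1 := by omega
      calc Lt*M = Lt*(b + (M-1-b) + 1) := by rw [← hMe]
        _ = b*Lt + (M-1-b)*Lt + Lt := by ring
    have hsplit : Lt*M - (a + b*Lt) = (Lt - a) + (M - 1 - b)*Lt := by omega
    rw [hsplit, Nat.add_mul_mod_self_right, Nat.mod_eq_of_lt (by omega)]
  refine ⟨?_, ?_, ?_⟩
  · -- injectivity
    rintro ⟨a,b⟩ hp ⟨a',b'⟩ hq heq
    simp only [Finset.coe_product, Set.mem_prod, Finset.mem_coe, Finset.mem_Icc,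
      Finset.mem_range] at hp hq
    obtain ⟨⟨ha1, ha2⟩, hb⟩ := hp
    obtain ⟨⟨ha1', ha2'⟩, hb'⟩ := hq
    dsimp only at heq
    obtain ⟨hx1, hy1⟩ := hval a b ha2 hb
    obtain ⟨hx2, hy2⟩ := hval a' b' ha2' hb'
    rw [hx1, hx2, hL', min_mul_sub, min_mul_sub] at heq
    have hu : min (a+b*Lt) (Lt*M - (a+b*Lt)) = min (a'+b'*Lt) (Lt*M - (a'+b'*Lt)) :=
      Nat.eq_of_mul_eq_mul_right hMpos heq
    have key : a + b*Lt = a' + b'*Lt := by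
      rcases le_total (a+b*Lt) (Lt*M - (a+b*Lt)) with h|h <;>
        rcases le_total (a'+b'*Lt) (Lt*M - (a'+b'*Lt)) with h'|h'
      · rw [min_eq_left h, min_eq_left h'] at hu; exact hu
      · rw [min_eq_left h, min_eq_right h'] at hu
        have m1 : (a + b*Lt) % Lt = a := hmodL a b (by omega)
        have m2 : (Lt*M - (a'+b'*Lt)) % Lt = Lt - a' := hmodR a' b' ha1' (by omega) hb'
        rw [hu] at m1; omega
      · rw [min_eq_right h, min_eq_left h'] at hu
        have m1 : (a' + b'*Lt) % Lt = a' := hmodL a' b' (by omega)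
        have m2 : (Lt*M - (a+b*Lt)) % Lt = Lt - a := hmodR a b ha1 (by omega) hb
        rw [← hu] at m1; omega
      · rw [min_eq_right h, min_eq_right h'] at hu; omega
    have haa : a = a' := by
      have m1 : (a + b*Lt) % Lt = a := hmodL a b (by omega)
      have m2 : (a' + b'*Lt) % Lt = a' := hmodL a' b' (by omega)
      rw [key] at m1; omega
    have hbb : b = b' := Nat.eq_of_mul_eq_mul_right hLtpos (by omega)
    exact Prod.ext haa hbb
  · -- disjointness
    rw [Finset.disjoint_left]
    rintro v hv hv2
    simp only [Finset.mem_image, Finset.mem_product, Finset.mem_Icc, Finset.mem_range,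
      Prod.exists] at hv hv2
    obtain ⟨a, b, ⟨⟨ha1, ha2⟩, hb⟩, hfv⟩ := hv
    obtain ⟨k, ⟨hk1, hk2⟩, hkv⟩ := hv2
    obtain ⟨hx1, hy1⟩ := hval a b ha2 hb
    rw [hx1, hL', min_mul_sub] at hfv
    have hkv' : (k*Lt)*M = v := by rw [← hkv]
    have hu : min (a+b*Lt) (Lt*M - (a+b*Lt)) = k*Lt :=
      Nat.eq_of_mul_eq_mul_right hMpos (hfv.trans hkv'.symm)
    have m0 : (k*Lt) % Lt = 0 := Nat.mul_mod_left k Lt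
    rcases le_total (a+b*Lt) (Lt*M - (a+b*Lt)) with h|h
    · rw [min_eq_left h] at hu
      have m1 : (a + b*Lt) % Lt = a := hmodL a b (by omega)
      rw [hu] at m1; omega
    · rw [min_eq_right h] at hu
      have m2 : (Lt*M - (a+b*Lt)) % Lt = Lt - a := hmodR a b ha1 (by omega) hb
      rw [hu] at m2; omega
  · -- union
    obtain ⟨w, hw⟩ := hLodd
    ext v
    simp only [Finset.mem_union, Finset.mem_image, Finset.mem_filter, Finset.mem_Icc,
      Finset.mem_range, Finset.mem_product, Prod.exists]
    constructor
    · rintro (⟨a, b, ⟨⟨ha1, ha2⟩, hb⟩, rfl⟩ | ⟨k, ⟨hk1, hk2⟩, rfl⟩)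
      · obtain ⟨hx1, hy1⟩ := hval a b ha2 hb
        rw [hx1, hL', min_mul_sub]
        set u := min (a+b*Lt) (Lt*M - (a+b*Lt)) with hu
        have hu1 : 1 ≤ u := by
          have : 1 ≤ a + b*Lt := by omega
          have : 1 ≤ Lt*M - (a+b*Lt) := by omega
          omega
        have hu2 : 2*u + 1 ≤ Lt*M := by omega
        have hmul : (2*u+1)*M ≤ (Lt*M)*M := mul_le_mul_left hu2 M
        have hex : (2*u+1)*M = 2*(u*M) + M := by ring
        have hb1 : 1 ≤ u*M := Nat.mul_pos hu1 hMpos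
        have hb2 : u*M ≤ (Lt*M*M-1)/2 := by omega
        exact ⟨⟨hb1, hb2⟩, dvd_mul_left M u⟩
      · have hk2' : 2*k ≤ M - 1 := by omega
        have hpos : 1 ≤ (Lt)*M := Nat.mul_pos hLtpos hMpos
        have hmul : (2*k)*(Lt*M) ≤ (M-1)*(Lt*M) := mul_le_mul_left (by omega) _
        have e : (M-1)*(Lt*M) + Lt*M = L := by
          have hMe : M = (M-1)+1 := by omega
          calc (M-1)*(Lt*M) + Lt*M = ((M-1)+1)*(Lt*M) := by ring
            _ = M*(Lt*M) := by rw [← hMe]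
            _ = L := by rw [hL']; ring
        have e2 : 2*(k*Lt*M) = (2*k)*(Lt*M) := by ring
        have hvpos : 1 ≤ k*Lt*M := Nat.mul_pos (Nat.mul_pos (by omega) hLtpos) hMpos
        exact ⟨⟨by omega, by omega⟩, Dvd.intro_left _ rfl⟩
    · rintro ⟨⟨hv1, hv2⟩, y, hyv⟩
      have hy1 : 1 ≤ y := by
        rcases Nat.eq_zero_or_pos y with h|h
        · subst h; simp at hyv; omega
        · exact h
      have h2v : 2*v ≤ L - 1 := by omega
      have h2y : 2*y < Lt*M := by
        by_contra hcon
        push_neg at hcon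
        have : (Lt*M)*M ≤ (2*y)*M := mul_le_mul_left hcon M
        have e : (2*y)*M = 2*(M*y) := by ring
        omega
      obtain ⟨q, r, hr, hdm⟩ : ∃ q r, r < Lt ∧ Lt*q + r = y :=
        ⟨y/Lt, y%Lt, Nat.mod_lt _ hLtpos, Nat.div_add_mod y Lt⟩
      have hcomm : Lt*q = q*Lt := mul_comm _ _
      have hq : q ≤ t := by
        by_contra hcon
        push_neg at hcon
        have h1 : (t+1)*Lt ≤ q*Lt := mul_le_mul_left (by omega) Lt
        have h2 : (t+1)*Lt = t*Lt + Lt := by ring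
        have h3 : Lt*M = 2*(t*Lt) + Lt := by rw [hM2]; ring
        omega
      rcases Nat.eq_zero_or_pos r with hr0 | hrpos
      · right
        have hq1 : 1 ≤ q := by
          rcases Nat.eq_zero_or_pos q with h|h
          · exfalso; rw [h, mul_zero] at hdm; omega
          · exact h
        refine ⟨q, ⟨hq1, by omega⟩, ?_⟩
        rw [hyv, ← hdm, hr0]; ring
      · left
        rcases le_or_gt r st with hrs | hrb
        · refine ⟨r, q, ⟨⟨hrpos, hrs⟩, by omega⟩, ?_⟩
          obtain ⟨hx1, hyb⟩ := hval r q hrs (by omega)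
          have hyy : r + q*Lt = y := by omega
          rw [hx1, hyy, hL', min_mul_sub]
          have hmin : min y (Lt*M - y) = y := min_eq_left (by omega)
          rw [hmin, hyv, mul_comm]
        · obtain ⟨c, hc2⟩ : ∃ c, M = q + c + 1 := ⟨M - 1 - q, by omega⟩
          refine ⟨Lt - r, c, ⟨⟨by omega, by omega⟩, by omega⟩, ?_⟩
          obtain ⟨hx1, hyb⟩ := hval (Lt - r) c (by omega) (by omega)
          have e : Lt*M = q*Lt + c*Lt + Lt := by
            calc Lt*M = Lt*(q+c+1) := by rw [← hc2]
              _ = q*Lt + c*Lt + Lt := by ring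
          have hyy : (Lt - r) + c*Lt = Lt*M - y := by omega
          rw [hx1, hyy, hL', min_mul_sub]
          have e2 : Lt*M - (Lt*M - y) = y := by omega
          rw [e2]
          have hmin : min (Lt*M - y) y = y := min_eq_right (by omega)
          rw [hmin, hyv, mul_comm]
end

section
/- The map (l, m) ↦ min(lM + 2m·r̃M, 2r − lM − 2m·r̃M) is injective on the set {1,…,r̃−1} × {0,…,M−1}, and its image is exactly the set {kM : 1 ≤ k ≤ r̃M and r̃ does not divide k}. (This shows that in the new D_{r} level 2 modular invariant the antisymmetric-tensor characters combining into the diagonal blocks appear exactly once each.) -/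
private lemma min_mul_right' (a b c : ℕ) : min a b * c = min (a * c) (b * c) := by
  rcases le_total a b with h | h
  · rw [min_eq_left h, min_eq_left (Nat.mul_le_mul_right c h)]
  · rw [min_eq_right h, min_eq_right (Nat.mul_le_mul_right c h)]

private lemma mod_2rt (rt l m : ℕ) (hl : l < 2 * rt) : (l + 2 * m * rt) % (2 * rt) = l := by
  rw [show l + 2 * m * rt = l + m * (2 * rt) by ring, Nat.add_mul_mod_self_right,
    Nat.mod_eq_of_lt hl]

private lemma div_2rt (rt l m : ℕ) (hrt : 0 < rt) (hl : l < 2 * rt) :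
    (l + 2 * m * rt) / (2 * rt) = m := by
  rw [show l + 2 * m * rt = l + m * (2 * rt) by ring,
    Nat.add_mul_div_right _ _ (by omega : 0 < 2 * rt), Nat.div_eq_of_lt hl, Nat.zero_add]

private lemma kbound' (rt M l m : ℕ) (hl1 : 1 ≤ l) (hl : l ≤ rt - 1) (hm : m < M) :
    l + 2 * m * rt + rt + 1 ≤ 2 * rt * M := by
  have h1 : 2 * rt * (m + 1) ≤ 2 * rt * M := Nat.mul_le_mul_left _ hm
  have h2 : 2 * m * rt + 2 * rt = 2 * rt * (m + 1) := by ring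
  have h3 : l + rt + 1 ≤ 2 * rt := by omega
  linarith

/-- If the images coincide, the parameters coincide. -/
private lemma inj_core (rt M l1 m1 l2 m2 : ℕ) (hrt : 0 < rt)
    (h11 : 1 ≤ l1) (h12 : l1 ≤ rt - 1) (h13 : m1 < M)
    (h21 : 1 ≤ l2) (h22 : l2 ≤ rt - 1) (h23 : m2 < M)
    (heq : min (l1 + 2 * m1 * rt) (2 * rt * M - (l1 + 2 * m1 * rt))
         = min (l2 + 2 * m2 * rt) (2 * rt * M - (l2 + 2 * m2 * rt))) :
    l1 = l2 ∧ m1 = m2 := by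
  have b1 := kbound' rt M l1 m1 h11 h12 h13
  have b2 := kbound' rt M l2 m2 h21 h22 h23
  -- helper: from (l1+2m1rt)+(l2+2m2rt) = 2rtM derive contradiction
  have mixed : (l1 + 2 * m1 * rt) + (l2 + 2 * m2 * rt) = 2 * rt * M → False := by
    intro h
    have h' : (l1 + l2) + (m1 + m2) * (2 * rt) = M * (2 * rt) := by
      rw [show (l1 + l2) + (m1 + m2) * (2 * rt) = (l1 + 2 * m1 * rt) + (l2 + 2 * m2 * rt) by
        ring, h]; ring
    have hmod : ((l1 + l2) + (m1 + m2) * (2 * rt)) % (2 * rt) = (l1 + l2) % (2 * rt) :=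
      Nat.add_mul_mod_self_right _ _ _
    have hmod2 : (M * (2 * rt)) % (2 * rt) = 0 := Nat.mul_mod_left _ _
    have hlt : l1 + l2 < 2 * rt := by omega
    rw [h', hmod2] at hmod
    rw [Nat.mod_eq_of_lt hlt] at hmod
    omega
  have same : (l1 + 2 * m1 * rt) = (l2 + 2 * m2 * rt) → l1 = l2 ∧ m1 = m2 := by
    intro h
    have e1 := mod_2rt rt l1 m1 (by omega)
    have e2 := mod_2rt rt l2 m2 (by omega)
    have e3 := div_2rt rt l1 m1 hrt (by omega)
    have e4 := div_2rt rt l2 m2 hrt (by omega)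
    constructor
    · rw [← e1, ← e2, h]
    · rw [← e3, ← e4, h]
  rcases le_total (l1 + 2 * m1 * rt) (2 * rt * M - (l1 + 2 * m1 * rt)) with c1 | c1 <;>
    rcases le_total (l2 + 2 * m2 * rt) (2 * rt * M - (l2 + 2 * m2 * rt)) with c2 | c2
  · rw [min_eq_left c1, min_eq_left c2] at heq
    exact same heq
  · rw [min_eq_left c1, min_eq_right c2] at heq
    exact absurd (by omega : (l1 + 2 * m1 * rt) + (l2 + 2 * m2 * rt) = 2 * rt * M) (by
      intro h; exact mixed h)
  · rw [min_eq_right c1, min_eq_left c2] at heq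
    exact absurd (by omega : (l1 + 2 * m1 * rt) + (l2 + 2 * m2 * rt) = 2 * rt * M) (by
      intro h; exact mixed h)
  · rw [min_eq_right c1, min_eq_right c2] at heq
    exact same (by omega)

private lemma surj_core (rt M k : ℕ) (hrt : 0 < rt) (hM : 0 < M)
    (hk1 : 1 ≤ k) (hk2 : k ≤ rt * M) (hdvd : ¬ rt ∣ k) :
    ∃ l m, 1 ≤ l ∧ l ≤ rt - 1 ∧ m < M ∧
      min (l + 2 * m * rt) (2 * rt * M - (l + 2 * m * rt)) = k := by
  set l0 := k % (2 * rt) with hl0def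
  set t := k / (2 * rt) with htdef
  have hmod : 2 * rt * t + l0 = k := Nat.div_add_mod k (2 * rt)
  have hl0lt : l0 < 2 * rt := Nat.mod_lt _ (by omega)
  have hl0nd : ¬ rt ∣ l0 := by
    intro h
    exact hdvd (by
      rw [← hmod]
      exact dvd_add ⟨2 * t, by ring⟩ h)
  have h0 : l0 ≠ 0 := by rintro h; rw [h] at hl0nd; exact hl0nd (dvd_zero rt)
  have hne : l0 ≠ rt := by rintro h; rw [h] at hl0nd; exact hl0nd dvd_rfl
  have hkne : k ≠ rt * M := by
    intro h; exact hdvd (h ▸ ⟨M, rfl⟩)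
  rcases Nat.lt_or_ge l0 rt with hcase | hcase
  · -- l0 < rt : use (l0, t)
    have hA : rt * (2 * t) ≤ rt * M := by
      have : 2 * rt * t = rt * (2 * t) := by ring
      linarith
    have h2t : 2 * t ≤ M := Nat.le_of_mul_le_mul_left hA hrt
    refine ⟨l0, t, by omega, by omega, by omega, ?_⟩
    have hksum : l0 + 2 * t * rt = k := by linarith
    rw [hksum]
    exact min_eq_left (Nat.le_sub_of_add_le (by linarith))
  · -- l0 > rt : use (2*rt - l0, M - 1 - t)
    have hl0gt : rt < l0 := by omega
    have hA : rt * (2 * t) < rt * M := by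
      have : 2 * rt * t = rt * (2 * t) := by ring
      linarith
    have h2t : 2 * t < M := lt_of_mul_lt_mul_left hA (Nat.zero_le _)
    refine ⟨2 * rt - l0, M - 1 - t, by omega, by omega, by omega, ?_⟩
    set m := M - 1 - t with hmdef
    have hm' : m + t + 1 = M := by omega
    have e1 : (2 * rt - l0) + l0 = 2 * rt := by omega
    have e2 : 2 * m * rt + 2 * rt * t + 2 * rt = 2 * rt * (m + t + 1) := by ring
    have e3 : 2 * rt * (m + t + 1) = 2 * rt * M := by rw [hm']
    have hS : (2 * rt - l0) + 2 * m * rt + k = 2 * rt * M := by linarith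
    have hsub : 2 * rt * M - ((2 * rt - l0) + 2 * m * rt) = k :=
      Nat.sub_eq_of_eq_add (by linarith)
    rw [hsub]
    exact min_eq_right (by linarith)

/-- For odd positive `M`, positive `r̃` and `r = r̃M²`, the map
`(l, m) ↦ min(lM + 2m·r̃M, 2r − lM − 2m·r̃M)` is injective on `{1,…,r̃−1} × {0,…,M−1}` and
its image is exactly `{kM : 1 ≤ k ≤ r̃M, r̃ ∤ k}`. -/
theorem d_level2_block_partition (M rt r : ℕ) (hM : Odd M) (hrt : 0 < rt)
    (hr : r = rt * M ^ 2) :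
    Set.InjOn
        (fun p : ℕ × ℕ =>
          min (p.1 * M + 2 * p.2 * rt * M) (2 * r - (p.1 * M + 2 * p.2 * rt * M)))
        ↑(Finset.Icc 1 (rt - 1) ×ˢ Finset.range M) ∧
      ((Finset.Icc 1 (rt - 1) ×ˢ Finset.range M).image
          (fun p : ℕ × ℕ =>
            min (p.1 * M + 2 * p.2 * rt * M) (2 * r - (p.1 * M + 2 * p.2 * rt * M))))
        = ((Finset.Icc 1 (rt * M)).filter fun k => ¬ rt ∣ k).image fun k => k * M := by
  have hMpos : 0 < M := hM.pos
  have fact : ∀ l m : ℕ, min (l * M + 2 * m * rt * M) (2 * r - (l * M + 2 * m * rt * M))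
      = (min (l + 2 * m * rt) (2 * rt * M - (l + 2 * m * rt))) * M := by
    intro l m
    have h1 : l * M + 2 * m * rt * M = (l + 2 * m * rt) * M := by ring
    have h2 : 2 * r = (2 * rt * M) * M := by rw [hr]; ring
    rw [h1, h2, ← Nat.sub_mul, ← min_mul_right']
  constructor
  · rintro ⟨l1, m1⟩ h1 ⟨l2, m2⟩ h2 heq
    simp only [Finset.coe_product, Set.mem_prod, Finset.mem_coe, Finset.mem_Icc,
      Finset.mem_range] at h1 h2
    have heq' : min (l1 * M + 2 * m1 * rt * M) (2 * r - (l1 * M + 2 * m1 * rt * M))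
        = min (l2 * M + 2 * m2 * rt * M) (2 * r - (l2 * M + 2 * m2 * rt * M)) := heq
    rw [fact, fact] at heq'
    have heq'' := Nat.eq_of_mul_eq_mul_right hMpos heq'
    obtain ⟨e1, e2⟩ := inj_core rt M l1 m1 l2 m2 hrt h1.1.1 h1.1.2 h1.2 h2.1.1 h2.1.2 h2.2 heq''
    exact Prod.ext e1 e2
  · ext x
    simp only [Finset.mem_image, Finset.mem_product, Finset.mem_Icc, Finset.mem_filter,
      Finset.mem_range]
    constructor
    · rintro ⟨⟨l, m⟩, ⟨⟨hl1, hl2⟩, hm⟩, hx⟩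
      have b := kbound' rt M l m hl1 hl2 hm
      set k0 := l + 2 * m * rt with hk0
      refine ⟨min k0 (2 * rt * M - k0), ⟨⟨?_, ?_⟩, ?_⟩, ?_⟩
      · exact le_min (by omega) (Nat.le_sub_of_add_le (by omega))
      · rcases le_total k0 (rt * M) with h | h
        · exact le_trans (min_le_left _ _) h
        · exact le_trans (min_le_right _ _) (Nat.sub_le_iff_le_add.mpr (by linarith))
      · intro hd
        have hdl : rt ∣ k0 := by
          rcases le_total k0 (2 * rt * M - k0) with h | h
          · rwa [min_eq_left h] at hd
          · rw [min_eq_right h] at hd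
            have hK : rt ∣ 2 * rt * M := ⟨2 * M, by ring⟩
            have := Nat.dvd_sub hK hd
            rwa [Nat.sub_sub_self (by omega : k0 ≤ 2 * rt * M)] at this
        have hll : rt ∣ l := by
          have h2 : rt ∣ 2 * m * rt := ⟨2 * m, by ring⟩
          have := Nat.dvd_sub hdl h2
          rwa [hk0, Nat.add_sub_cancel] at this
        have := Nat.le_of_dvd (by omega) hll
        omega
      · rw [← hx]
        exact (fact l m).symm
    · rintro ⟨k, ⟨⟨hk1, hk2⟩, hdvd⟩, hx⟩
      obtain ⟨l, m, hl1, hl2, hm, hmin⟩ := surj_core rt M k hrt hMpos hk1 hk2 hdvd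
      exact ⟨⟨l, m⟩, ⟨⟨hl1, hl2⟩, hm⟩, by rw [fact l m, hmin, hx]⟩
end

section
/- Let M and L̃ be odd positive integers, L = L̃M², and let l, m be integers with 1 ≤ l ≤ (L̃−1)/2 and 0 ≤ m ≤ M−1. Set x_m = lM + m·L̃M. Then the rational number x_m(L − x_m)/(2L) − lM(L − lM)/(2L) is an integer. (This verifies that the conformal weights ℓ(L−ℓ)/(2L) of the SO(L) level 2 antisymmetric tensors combined in one block of the new modular invariant agree modulo 1, i.e. T-invariance of the diagonal blocks.) -/
/-!
Writing `x = ℓ + d` with `ℓ = lM`, `d = mL̃M` and `L = L̃M²`, the weight difference is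
`d(L - 2ℓ - d)/(2L) = m(L̃(M - m) - 2l)/2`, and `m(M - m)` is even because `m` and `M - m`
have opposite parity when `M` is odd.
-/

/-- The conformal weight `ℓ(L - ℓ)/(2L)` of the rank-`ℓ` antisymmetric tensor of `SO(L)` at
level 2. -/
def soLevelTwoWeight (L ℓ : ℚ) : ℚ := ℓ * (L - ℓ) / (2 * L)

lemma soLevelTwoWeight_add_sub (L ℓ d : ℚ) (hL : L ≠ 0) :
    soLevelTwoWeight L (ℓ + d) - soLevelTwoWeight L ℓ = d * (L - 2 * ℓ - d) / (2 * L) := by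
  unfold soLevelTwoWeight
  field_simp
  ring

lemma soLevelTwoWeight_block_sub (Lt M l m : ℚ) (hLt : Lt ≠ 0) (hM : M ≠ 0) :
    soLevelTwoWeight (Lt * M ^ 2) (l * M + m * Lt * M) - soLevelTwoWeight (Lt * M ^ 2) (l * M)
      = m * (Lt * (M - m) - 2 * l) / 2 := by
  rw [soLevelTwoWeight_add_sub _ _ _ (by positivity)]
  field_simp
  ring

lemma Int.even_mul_sub_of_odd {M : ℤ} (hM : Odd M) (m : ℤ) : Even (m * (M - m)) := by
  rcases Int.even_or_odd m with hm | hm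
  · exact hm.mul_right _
  · exact (hM.sub_odd hm).mul_left _

lemma Int.even_block_weight_numerator {M : ℤ} (hM : Odd M) (Lt l m : ℤ) :
    Even (m * (Lt * (M - m) - 2 * l)) := by
  have hsplit : m * (Lt * (M - m) - 2 * l) = Lt * (m * (M - m)) - 2 * (m * l) := by ring
  rw [hsplit]
  exact ((Int.even_mul_sub_of_odd hM m).mul_left Lt).sub (even_two_mul _)

lemma Int.exists_cast_eq_half_of_even {n : ℤ} (hn : Even n) : ∃ z : ℤ, (n : ℚ) / 2 = z := by
  obtain ⟨z, rfl⟩ := hn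
  exact ⟨z, by push_cast; ring⟩

theorem so_level2_block_weights_integral_general (M Lt L : ℕ) (hM : Odd M) (hLt : Odd Lt)
    (hL : L = Lt * M ^ 2) (l m : ℕ) :
    ∃ z : ℤ,
      ((l * M + m * Lt * M : ℕ) : ℚ) * ((L : ℚ) - ((l * M + m * Lt * M : ℕ) : ℚ)) / (2 * L)
        - ((l * M : ℕ) : ℚ) * ((L : ℚ) - ((l * M : ℕ) : ℚ)) / (2 * L) = (z : ℚ) := by
  have hMZ : Odd (M : ℤ) := by exact_mod_cast hM
  have hLtQ : (Lt : ℚ) ≠ 0 := by exact_mod_cast hLt.pos.ne'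
  have hMQ : (M : ℚ) ≠ 0 := by exact_mod_cast hM.pos.ne'
  obtain ⟨z, hz⟩ := Int.exists_cast_eq_half_of_even (Int.even_block_weight_numerator hMZ Lt l m)
  refine ⟨z, ?_⟩
  have hdiff := soLevelTwoWeight_block_sub Lt M l m hLtQ hMQ
  subst hL
  push_cast at hz ⊢
  rw [← hz, ← hdiff]
  rfl

/-- For odd positive `M`, `L̃`, `L = L̃M²`, `1 ≤ l ≤ (L̃−1)/2`, `0 ≤ m ≤ M−1`
and `x_m = lM + m·L̃M`, the rational number `x_m(L−x_m)/(2L) − lM(L−lM)/(2L)` is an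
integer. -/
theorem so_level2_block_weights_integral (M Lt L : ℕ) (hM : Odd M) (hLt : Odd Lt)
    (hL : L = Lt * M ^ 2) (l m : ℕ) (hl1 : 1 ≤ l) (hl2 : l ≤ (Lt - 1) / 2) (hm : m ≤ M - 1) :
    ∃ z : ℤ,
      ((l * M + m * Lt * M : ℕ) : ℚ) * ((L : ℚ) - ((l * M + m * Lt * M : ℕ) : ℚ)) / (2 * L)
        - ((l * M : ℕ) : ℚ) * ((L : ℚ) - ((l * M : ℕ) : ℚ)) / (2 * L) = (z : ℚ) :=
  so_level2_block_weights_integral_general M Lt L hM hLt hL l m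
end
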